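/- Let e₁, …, eₙ be pairwise commuting idempotent endomorphisms of an R-module M such that M = ∑_{i=1}^n im(e_i). Then ⋂_{i=1}^n ker(e_i) = 0. -/

import Mathlib

/-!
If `x` lies in every `ker eᵢ` and in `range e₁ + ⋯ + range eₖ`, write `x = y + eₖ z` with `y` in the
first `k - 1` ranges. Applying `1 - eₖ` fixes `x`, kills `eₖ z`, and preserves the first `k - 1`
ranges because `eₖ` commutes with their projections; so `x = (1 - eₖ) y` lies in the first `k - 1`
ranges, and induction on `k` gives `x = 0`.
-/

open LinearMap

namespace Module.End

lemma iSup_mem_invtSubmodule {R M : Type*} [Semiring R] [AddCommMonoid M] [Module R M]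
    {ι : Sort*} {f : End R M} {p : ι → Submodule R M}
    (hp : ∀ i, p i ∈ f.invtSubmodule) : (⨆ i, p i) ∈ f.invtSubmodule :=
  iSup_le fun i ↦ (hp i).trans (Submodule.comap_mono (le_iSup p i))

variable {R M : Type*} [Ring R] [AddCommGroup M] [Module R M]

lemma mem_of_mem_sup_range_of_apply_eq_zero {e : End R M} (he : IsIdempotentElem e)
    {p : Submodule R M} (hp : p ∈ e.invtSubmodule) {x : M} (hx : x ∈ p ⊔ range e)
    (hex : e x = 0) : x ∈ p := by
  obtain ⟨y, hy, _, ⟨z, rfl⟩, rfl⟩ := Submodule.mem_sup.mp hx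
  have hez : e z = -e y := by
    rw [map_add, ← Module.End.mul_apply, he.eq, add_eq_zero_iff_neg_eq] at hex
    exact hex.symm
  rw [hez, ← sub_eq_add_neg]
  exact p.sub_mem hy (hp hy)

variable {ι : Type*} {e : ι → End R M}

theorem eq_zero_of_mem_biSup_range_of_apply_eq_zero (hidem : ∀ i, IsIdempotentElem (e i))
    (hcomm : ∀ i j, Commute (e i) (e j)) (s : Finset ι) {x : M}
    (hx : x ∈ ⨆ i ∈ s, range (e i)) (hker : ∀ i ∈ s, e i x = 0) : x = 0 := by
  classical
  induction s using Finset.induction generalizing x with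
  | empty => simpa using hx
  | @insert a s _ ih =>
    have hinvt : (⨆ i ∈ s, range (e i)) ∈ (e a).invtSubmodule :=
      iSup_mem_invtSubmodule fun i ↦ iSup_mem_invtSubmodule fun _ ↦
        (((hidem i).commute_iff).mp (hcomm i a)).1
    rw [Finset.iSup_insert, sup_comm] at hx
    exact ih (mem_of_mem_sup_range_of_apply_eq_zero (hidem a) hinvt hx
      (hker a (Finset.mem_insert_self a s))) fun i hi ↦ hker i (Finset.mem_insert_of_mem hi)

theorem iSup_range_inf_iInf_ker_eq_bot (hidem : ∀ i, IsIdempotentElem (e i))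
    (hcomm : ∀ i j, Commute (e i) (e j)) :
    (⨆ i, range (e i)) ⊓ (⨅ i, ker (e i)) = ⊥ := by
  refine (Submodule.eq_bot_iff _).mpr fun x ⟨hx, hker⟩ ↦ ?_
  obtain ⟨s, hs⟩ := Submodule.mem_iSup_iff_exists_finset.mp hx
  exact eq_zero_of_mem_biSup_range_of_apply_eq_zero hidem hcomm s hs
    fun i _ ↦ Submodule.mem_iInf _ |>.mp hker i

end Module.End

theorem stmt4 {R M : Type*} [CommRing R] [AddCommGroup M] [Module R M]
    {n : ℕ} (e : Fin n → Module.End R M)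
    (hidem : ∀ i, e i * e i = e i)
    (hcomm : ∀ i j, Commute (e i) (e j))
    (hspan : (⨆ i, LinearMap.range (e i)) = ⊤) :
    (⨅ i, LinearMap.ker (e i)) = ⊥ := by
  simpa [hspan] using Module.End.iSup_range_inf_iInf_ker_eq_bot hidem hcomm
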